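/- Let S = {n_1, n_2, ..., n_s} with 2 ≤ n_s < ... < n_2 < n_1 and n_1 = n_2 + 1. If H = (X, C, D) is a one-realization of S, then |X| ≥ 2n_1 - n_s - 1. -/
import Mathlib


/-- A mixed hypergraph on vertex type `V`: families of C-edges and D-edges. -/
structure MixedHypergraph (V : Type*) where
  Cedges : Set (Set V)
  Dedges : Set (Set V)

/-- A strict `k`-coloring: a surjective coloring with `k` colors such that every
C-edge has two distinct vertices with a common color and every D-edge has two
distinct vertices with distinct colors. -/
def IsStrictColoring {V : Type*} (H : MixedHypergraph V) (k : ℕ) (f : V → Fin k) : Prop :=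
  Function.Surjective f ∧
  (∀ e ∈ H.Cedges, ∃ u ∈ e, ∃ v ∈ e, u ≠ v ∧ f u = f v) ∧
  (∀ e ∈ H.Dedges, ∃ u ∈ e, ∃ v ∈ e, u ≠ v ∧ f u ≠ f v)

/-- The feasible set of a mixed hypergraph. -/
def FeasibleSet {V : Type*} (H : MixedHypergraph V) : Set ℕ :=
  {k | ∃ f : V → Fin k, IsStrictColoring H k f}

/-- Two colorings induce the same partition of the vertex set. -/
def SamePartition {V : Type*} {k k' : ℕ} (f : V → Fin k) (g : V → Fin k') : Prop :=
  ∀ u v, f u = f v ↔ g u = g v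

/-- `H` is a one-realization of `S`: its feasible set is `S` and for each `k`
the partition induced by a strict `k`-coloring is unique. -/
def IsOneRealization {V : Type*} (H : MixedHypergraph V) (S : Set ℕ) : Prop :=
  FeasibleSet H = S ∧
  ∀ (k : ℕ) (f g : V → Fin k), IsStrictColoring H k f → IsStrictColoring H k g →
    SamePartition f g

lemma merge_strict {V : Type*} (H : MixedHypergraph V) {N k : ℕ}
    (f : V → Fin (N + 1)) (hf : IsStrictColoring H (N + 1) f)
    (h : V → Fin k) (hh : IsStrictColoring H k h)
    (c c' : Fin (N + 1)) (hcc' : c ≠ c')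
    (x y : V) (hx : ∀ v, f v = c ↔ v = x) (hy : ∀ v, f v = c' ↔ v = y)
    (hxy : h x = h y) :
    ∃ f' : V → Fin N, IsStrictColoring H N f' ∧
      ∀ u v : V, f' u = f' v ↔
        (f u = f v ∨ ((f u = c ∨ f u = c') ∧ (f v = c ∨ f v = c'))) := by
  classical
  set g : V → Fin (N + 1) := fun v => if f v = c' then c else f v with hg
  have hgne : ∀ v, g v ≠ c' := by
    intro v
    by_cases hv : f v = c' <;> simp [hg, hv, hcc']
  have hcard : Fintype.card {d : Fin (N + 1) // d ≠ c'} = N := by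
    simp [Fintype.card_subtype_compl, Fintype.card_subtype_eq]
  let e : {d : Fin (N + 1) // d ≠ c'} ≃ Fin N := Fintype.equivFinOfCardEq hcard
  set f' : V → Fin N := fun v => e ⟨g v, hgne v⟩ with hf'
  have hgiff : ∀ u v : V, g u = g v ↔
      (f u = f v ∨ ((f u = c ∨ f u = c') ∧ (f v = c ∨ f v = c'))) := by
    intro u v
    show (if f u = c' then c else f u) = (if f v = c' then c else f v) ↔ _
    by_cases hu : f u = c' <;> by_cases hv : f v = c'
    · rw [if_pos hu, if_pos hv]
      exact iff_of_true rfl (Or.inl (hu.trans hv.symm))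
    · rw [if_pos hu, if_neg hv]
      constructor
      · intro h1
        exact Or.inr ⟨Or.inr hu, Or.inl h1.symm⟩
      · rintro (h1 | ⟨-, h1 | h1⟩)
        · exact absurd (h1 ▸ hu) hv
        · exact h1.symm
        · exact absurd h1 hv
    · rw [if_neg hu, if_pos hv]
      constructor
      · intro h1
        exact Or.inr ⟨Or.inl h1, Or.inr hv⟩
      · rintro (h1 | ⟨h1 | h1, -⟩)
        · exact absurd (h1.symm ▸ hv) hu
        · exact h1
        · exact absurd h1 hu
    · rw [if_neg hu, if_neg hv]
      constructor
      · exact Or.inl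
      · rintro (h1 | ⟨h1 | h1, h2 | h2⟩)
        · exact h1
        · exact h1.trans h2.symm
        · exact absurd h2 hv
        · exact absurd h1 hu
        · exact absurd h1 hu
  have hiff : ∀ u v : V, f' u = f' v ↔
      (f u = f v ∨ ((f u = c ∨ f u = c') ∧ (f v = c ∨ f v = c'))) := by
    intro u v
    rw [← hgiff]
    constructor
    · intro h1
      have := e.injective h1
      exact congrArg Subtype.val this
    · intro h1
      exact congrArg e (Subtype.ext h1)
  refine ⟨f', ⟨?_, ?_, ?_⟩, hiff⟩
  · -- surjective
    intro t
    obtain ⟨v, hv⟩ := hf.1 (e.symm t).1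
    refine ⟨v, ?_⟩
    have h1 : g v = (e.symm t).1 := by
      have h2 : f v ≠ c' := hv ▸ (e.symm t).2
      show (if f v = c' then c else f v) = _
      rw [if_neg h2, hv]
    have : (⟨g v, hgne v⟩ : {d : Fin (N + 1) // d ≠ c'}) = e.symm t := Subtype.ext h1
    rw [hf']
    simp only [this, Equiv.apply_symm_apply]
  · -- C-edges
    intro E hE
    obtain ⟨u, hu, v, hv, huv, hfe⟩ := hf.2.1 E hE
    exact ⟨u, hu, v, hv, huv, (hiff u v).mpr (Or.inl hfe)⟩
  · -- D-edges
    intro E hE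
    by_contra hcon
    push_neg at hcon
    obtain ⟨u, hu, v, hv, huv, hne⟩ := hf.2.2 E hE
    have h1 := (hiff u v).mp (hcon u hu v hv huv)
    have h2 := h1.resolve_left hne
    have hxe : x ∈ E ∧ y ∈ E := by
      rcases h2 with ⟨hu1 | hu1, hv1 | hv1⟩
      · exact absurd (hu1.trans hv1.symm) hne
      · exact ⟨(hx u).mp hu1 ▸ hu, (hy v).mp hv1 ▸ hv⟩
      · exact ⟨(hx v).mp hv1 ▸ hv, (hy u).mp hu1 ▸ hu⟩
      · exact absurd (hu1.trans hv1.symm) hne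
    have hfx : f x = c := (hx x).mpr rfl
    have hmem : ∀ w ∈ E, w = x ∨ w = y := by
      intro w hw
      have h3 : f' w = f' x := by
        by_cases hwx : w = x
        · rw [hwx]
        · exact hcon w hw x hxe.1 hwx
      rcases (hiff w x).mp h3 with h4 | ⟨h4 | h4, _⟩
      · exact Or.inl ((hx w).mp (h4.trans hfx))
      · exact Or.inl ((hx w).mp h4)
      · exact Or.inr ((hy w).mp h4)
    obtain ⟨a, ha, b, hb, hab, hhab⟩ := hh.2.2 E hE
    rcases hmem a ha with h4 | h4 <;> rcases hmem b hb with h5 | h5 <;> subst h4 <;> subst h5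
    · exact hab rfl
    · exact hhab hxy
    · exact hhab hxy.symm
    · exact hab rfl

open Finset in
lemma key_count {V : Type*} [Fintype V] (H : MixedHypergraph V) {N k : ℕ}
    (f : V → Fin (N + 1)) (hf : IsStrictColoring H (N + 1) f)
    (h : V → Fin k) (hh : IsStrictColoring H k h)
    (huniq : ∀ f₁ f₂ : V → Fin N, IsStrictColoring H N f₁ → IsStrictColoring H N f₂ →
      SamePartition f₁ f₂) :
    2 * (N + 1) ≤ Fintype.card V + k + 1 := by
  classical
  set F : Fin (N + 1) → Finset V := fun cc => univ.filter (fun v => f v = cc) with hF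
  have hFne : ∀ cc, 1 ≤ (F cc).card := by
    intro cc
    obtain ⟨v, hv⟩ := hf.1 cc
    exact card_pos.mpr ⟨v, by simp [hF, hv]⟩
  have hsum : ∑ cc, (F cc).card = Fintype.card V := by
    rw [← card_univ]
    exact (card_eq_sum_card_fiberwise (fun v _ => mem_univ (f v))).symm
  have hVne : Nonempty V := ⟨(hf.1 ⟨0, Nat.succ_pos N⟩).choose⟩
  -- singleton-class representatives
  have hw : ∀ cc : Fin (N + 1), ∃ xcc : V, (F cc).card = 1 → ∀ v, f v = cc ↔ v = xcc := by
    intro cc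
    by_cases hcc : (F cc).card = 1
    · obtain ⟨xcc, hxcc⟩ := card_eq_one.mp hcc
      refine ⟨xcc, fun _ v => ?_⟩
      rw [show (f v = cc) ↔ v ∈ F cc from by simp [hF], hxcc, mem_singleton]
    · exact ⟨Classical.arbitrary V, fun h' => absurd h' hcc⟩
  choose w hwspec using hw
  set T : Finset (Fin (N + 1)) := univ.filter (fun cc => (F cc).card = 1) with hT
  have hTspec : ∀ cc ∈ T, ∀ v, f v = cc ↔ v = w cc := by
    intro cc hcc
    exact hwspec cc (mem_filter.mp hcc).2
  have hm : T.card ≤ k + 1 := by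
    by_contra hcon
    push_neg at hcon
    have hp1 : (univ : Finset (Fin k)).card < T.card := by
      rw [card_univ, Fintype.card_fin]; omega
    obtain ⟨c₁, hc₁, c₂, hc₂, h12, he12⟩ :=
      exists_ne_map_eq_of_card_lt_of_maps_to hp1 (fun a _ => mem_univ (h (w a)))
    have hp2 : (univ : Finset (Fin k)).card < (T.erase c₁).card := by
      rw [card_erase_of_mem hc₁, card_univ, Fintype.card_fin]; omega
    obtain ⟨d₁, hd₁, d₂, hd₂, h34, he34⟩ :=
      exists_ne_map_eq_of_card_lt_of_maps_to hp2 (fun a _ => mem_univ (h (w a)))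
    have hd₁c : d₁ ≠ c₁ := ne_of_mem_erase hd₁
    have hd₂c : d₂ ≠ c₁ := ne_of_mem_erase hd₂
    have hd₁T := mem_of_mem_erase hd₁
    have hd₂T := mem_of_mem_erase hd₂
    obtain ⟨f₁, hf₁, hiff₁⟩ := merge_strict H f hf h hh c₁ c₂ h12 (w c₁) (w c₂)
      (hTspec c₁ hc₁) (hTspec c₂ hc₂) he12
    obtain ⟨f₂, hf₂, hiff₂⟩ := merge_strict H f hf h hh d₁ d₂ h34 (w d₁) (w d₂)
      (hTspec d₁ hd₁T) (hTspec d₂ hd₂T) he34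
    have hfc₁ : f (w c₁) = c₁ := (hTspec c₁ hc₁ (w c₁)).mpr rfl
    have hfc₂ : f (w c₂) = c₂ := (hTspec c₂ hc₂ (w c₂)).mpr rfl
    have h1 : f₁ (w c₁) = f₁ (w c₂) := by
      rw [hiff₁]
      exact Or.inr ⟨Or.inl hfc₁, Or.inr hfc₂⟩
    have h2 := (huniq f₁ f₂ hf₁ hf₂ (w c₁) (w c₂)).mp h1
    rw [hiff₂, hfc₁, hfc₂] at h2
    rcases h2 with h2 | ⟨h2 | h2, -⟩
    · exact h12 h2
    · exact hd₁c h2.symm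
    · exact hd₂c h2.symm
  -- counting
  have hs1 : ∑ cc ∈ T, (F cc).card = T.card := by
    rw [Finset.sum_congr rfl (fun cc hcc => (mem_filter.mp hcc).2), Finset.sum_const,
      smul_eq_mul, mul_one]
  have hs2 : (univ.filter (fun cc => ¬ (F cc).card = 1)).card * 2 ≤
      ∑ cc ∈ univ.filter (fun cc => ¬ (F cc).card = 1), (F cc).card := by
    have := Finset.card_nsmul_le_sum (univ.filter (fun cc => ¬ (F cc).card = 1))
      (fun cc => (F cc).card) 2 (fun cc hcc => by
        have h1 := hFne cc
        have h2 : ¬ (F cc).card = 1 := (mem_filter.mp hcc).2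
        show 2 ≤ (F cc).card
        omega)
    simpa [smul_eq_mul] using this
  have hsplit := Finset.sum_filter_add_sum_filter_not univ
    (fun cc => (F cc).card = 1) (fun cc => (F cc).card)
  have hTc : T.card + (univ.filter (fun cc => ¬ (F cc).card = 1)).card = N + 1 := by
    rw [hT, Finset.card_filter_add_card_filter_not, card_univ, Fintype.card_fin]
  rw [← hT] at hsplit
  rw [hs1] at hsplit
  omega

set_option maxHeartbeats 2000000 in
/-- for `S = {n₁,…,n_s}` with `2 ≤ n_s < ⋯ < n₂ < n₁` and `n₁ = n₂ + 1`,
every one-realization of `S` has at least `2n₁ - n_s - 1` vertices.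
Here `n i` is `n_{i+1}` of the paper, so `n 0 = n₁` and `n (s-1) = n_s`. -/
theorem one_realization_lower_bound_no_gap (s : ℕ) (hs : 2 ≤ s) (n : Fin s → ℕ)
    (hanti : StrictAnti n) (h2 : 2 ≤ n ⟨s - 1, by omega⟩)
    (heq : n ⟨0, by omega⟩ = n ⟨1, by omega⟩ + 1)
    (V : Type*) [Fintype V] (H : MixedHypergraph V)
    (hH : IsOneRealization H (Set.range n)) :
    2 * n ⟨0, by omega⟩ - n ⟨s - 1, by omega⟩ - 1 ≤ Fintype.card V := by
  obtain ⟨hfeas, huniq⟩ := hH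
  have h0lt : (0 : ℕ) < s := by omega
  have hslt : s - 1 < s := by omega
  have hlt : n ⟨s - 1, hslt⟩ < n ⟨0, h0lt⟩ := hanti (by simp [Fin.lt_def]; omega)
  have hmem1 : n ⟨0, h0lt⟩ ∈ FeasibleSet H := by
    rw [hfeas]; exact ⟨⟨0, h0lt⟩, rfl⟩
  have hmems : n ⟨s - 1, hslt⟩ ∈ FeasibleSet H := by
    rw [hfeas]; exact ⟨⟨s - 1, hslt⟩, rfl⟩
  obtain ⟨N, hN⟩ : ∃ N, n ⟨0, h0lt⟩ = N + 1 := ⟨n ⟨0, h0lt⟩ - 1, by omega⟩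
  rw [hN] at hmem1
  obtain ⟨f, hf⟩ := hmem1
  obtain ⟨h, hh⟩ := hmems
  have hkey := key_count H f hf h hh (huniq N)
  have hgoal : 2 * n ⟨0, h0lt⟩ - n ⟨s - 1, hslt⟩ - 1 ≤ Fintype.card V := by omega
  exact hgoal
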